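/- arXiv:1006.5620 — 5 statements merged into one kernel-verified Lean document; each statement's English description precedes it below -/
import Mathlib

section
/- Fix an odd positive integer w and m ≥ 0. For j = 0,…,m set k_j = j + (w−1)/2. The (m+1)×(m+1) matrix M with entries M_{i,j} = (2k_j+i+1)!/(2k_j+i+1−2j)! + (i+1)!/(i+1−2j)! for 0 ≤ i,j ≤ m (with the convention that n!/(n−r)! = 0 if r > n) is invertible. -/
/-!
Column `j` of the matrix lists the values at `x = 0, …, m` of the polynomial
`F_j(x) = (x + w + 2j)^{(2j)} + (x + 1)^{(2j)}` (falling factorials) of degree exactly `2j`.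
The reflection identity `D_k(k - 1 - z) = (-1)^k D_k(z)` for the falling factorial polynomial
`D_k` makes every `F_j` invariant under `x ↦ -(w + 2) - x`. So a combination `∑ v_j F_j`
killed by the matrix also vanishes at `-(w + 2) - i` for `i = 0, …, m`: that is `2m + 2`
distinct roots for a polynomial of degree at most `2m`, hence it is zero, and since the
degrees `2j` are distinct, `v = 0`.
-/

open Polynomial
open scoped Function

namespace Polynomial

theorem linearIndependent_of_injective_degree {K ι : Type*} [Field K] {F : ι → K[X]}
    (hF : ∀ i, F i ≠ 0) (hdeg : Function.Injective fun i => (F i).degree) :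
    LinearIndependent K F := by
  refine linearIndependent_iff'.mpr fun s g hsum i hi => ?_
  by_contra hgi
  have hdeg_smul : ∀ j, g j ≠ 0 → (g j • F j).degree = (F j).degree := fun j hj => by
    rw [smul_eq_C_mul, degree_C_mul hj]
  have hpairwise :
      {j | j ∈ s ∧ g j • F j ≠ 0}.Pairwise (Ne on fun j => (g j • F j).degree) := by
    rintro j ⟨-, hj⟩ k ⟨-, hk⟩ hjk
    change (g j • F j).degree ≠ (g k • F k).degree
    rw [hdeg_smul j (left_ne_zero_of_smul hj), hdeg_smul k (left_ne_zero_of_smul hk)]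
    exact fun h => hjk (hdeg h)
  have hle : (F i).degree ≤ (∑ j ∈ s, g j • F j).degree := by
    rw [degree_sum_eq_of_disjoint _ s hpairwise, ← hdeg_smul i hgi]
    exact Finset.le_sup (f := fun j => (g j • F j).degree) hi
  rw [hsum, degree_zero, le_bot_iff, degree_eq_bot] at hle
  exact hF i hle

theorem det_eval_ne_zero_of_eval_sub_eq {K ι : Type*} [Field K] [Fintype ι] [DecidableEq ι]
    {F : ι → K[X]} (hF : LinearIndependent K F)
    (hdeg : ∀ j, (F j).degree < ↑(2 * Fintype.card ι)) {c : K}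
    (hsymm : ∀ j y, (F j).eval (c - y) = (F j).eval y) {x : ι → K}
    (hx : Function.Injective (Sum.elim x fun i => c - x i)) :
    (Matrix.of fun i j => (F j).eval (x i)).det ≠ 0 := by
  intro hdet
  obtain ⟨v, hv, hMv⟩ := Matrix.exists_mulVec_eq_zero_iff.mpr hdet
  set p := ∑ j, v j • F j
  have hroot : ∀ i, p.eval (x i) = 0 := fun i => by
    simpa [p, Matrix.mulVec, dotProduct, eval_finsetSum, mul_comm] using congrFun hMv i
  have hroot_reflect : ∀ i, p.eval (c - x i) = 0 := by
    simpa only [p, eval_finsetSum, eval_smul, hsymm] using hroot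
  have hp_deg : p ∈ degreeLT K (2 * Fintype.card ι) :=
    Submodule.sum_mem _ fun j _ => Submodule.smul_mem _ _ (mem_degreeLT.mpr (hdeg j))
  have hp_zero : p = 0 := by
    refine eq_zero_of_degree_lt_of_eval_index_eq_zero Finset.univ hx.injOn ?_ ?_
    · rw [Finset.card_univ, Fintype.card_sum, ← two_mul]
      exact mem_degreeLT.mp hp_deg
    · rintro (i | i) - <;> simp [hroot, hroot_reflect]
  exact hv (_root_.funext fun j => Fintype.linearIndependent_iff.mp hF v hp_zero j)

end Polynomial

section LambdaPoly

variable {R : Type*} [CommRing R]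

theorem descPochhammer_eval_sub_sub (k : ℕ) (z : R) :
    (descPochhammer R k).eval (k - 1 - z) = (-1) ^ k * (descPochhammer R k).eval z := by
  rw [descPochhammer_eval_eq_ascPochhammer, ← ascPochhammer_eval_neg_eq_descPochhammer]
  ring_nf

variable (R) in
/-- `lambdaPoly R w (2 * j)` is the polynomial `F_j` whose values at `0, …, m` form column `j`. -/
noncomputable def lambdaPoly (a : R) (k : ℕ) : R[X] :=
  (descPochhammer R k).comp (X + C (a + k)) + (descPochhammer R k).comp (X + C 1)

theorem eval_lambdaPoly (a y : R) (k : ℕ) :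
    (lambdaPoly R a k).eval y =
      (descPochhammer R k).eval (y + a + k) + (descPochhammer R k).eval (y + 1) := by
  simp [lambdaPoly, eval_comp, add_assoc]

theorem lambdaPoly_eval_neg_sub {k : ℕ} (hk : Even k) (a y : R) :
    (lambdaPoly R a k).eval (-(a + 2) - y) = (lambdaPoly R a k).eval y := by
  have h₁ : -(a + 2) - y + a + k = k - 1 - (y + 1) := by ring
  have h₂ : -(a + 2) - y + 1 = k - 1 - (y + a + k) := by ring
  rw [eval_lambdaPoly, eval_lambdaPoly, h₁, h₂, descPochhammer_eval_sub_sub,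
    descPochhammer_eval_sub_sub, hk.neg_one_pow, one_mul, one_mul, add_comm]

theorem degree_lambdaPoly [IsDomain R] [NeZero (2 : R)] (a : R) (k : ℕ) :
    (lambdaPoly R a k).degree = k := by
  have hmonic : ∀ r : R, ((descPochhammer R k).comp (X + C r)).Monic := fun r =>
    (monic_descPochhammer R k).comp_X_add_C r
  have hdeg : ∀ r : R, ((descPochhammer R k).comp (X + C r)).degree = k := fun r => by
    rw [degree_eq_natDegree (hmonic r).ne_zero, natDegree_comp, descPochhammer_natDegree,
      natDegree_X_add_C, mul_one]
  rw [lambdaPoly, degree_add_eq_of_leadingCoeff_add_ne_zero, hdeg, hdeg, max_self]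
  rw [(hmonic _).leadingCoeff, (hmonic _).leadingCoeff, one_add_one_eq_two]
  exact two_ne_zero

theorem cast_descFactorial_add_cast_descFactorial (w i k : ℕ) :
    ((i + w + k).descFactorial k : R) + ((i + 1).descFactorial k : R) =
      (lambdaPoly R w k).eval (i : R) := by
  rw [eval_lambdaPoly, ← descPochhammer_eval_eq_descFactorial,
    ← descPochhammer_eval_eq_descFactorial]
  push_cast
  rfl

end LambdaPoly

theorem injective_sumElim_natCast_sub {K : Type*} [Field K] [LinearOrder K]
    [IsStrictOrderedRing K] {n : ℕ} {c : K} (hc : c < 0) :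
    Function.Injective (Sum.elim (fun i : Fin n => (i : K)) fun i : Fin n => c - (i : K)) := by
  refine (Nat.cast_injective.comp Fin.val_injective).sumElim
    (fun i i' h => ?_) fun i i' h => ?_
  · simpa [Fin.ext_iff] using h
  · have hi : (0 : K) ≤ i := Nat.cast_nonneg _
    have hi' : (0 : K) ≤ i' := Nat.cast_nonneg _
    simp only [Function.comp_apply] at h
    linarith

theorem lambda_matrix_invertible_general (w m : ℕ) (hw : Odd w) :
    (Matrix.of fun i j : Fin (m + 1) =>
        (((2 * ((j : ℕ) + (w - 1) / 2) + (i : ℕ) + 1).descFactorial (2 * (j : ℕ)) : ℝ) +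
          (((i : ℕ) + 1).descFactorial (2 * (j : ℕ)) : ℝ))).det ≠ 0 := by
  have hshift : ∀ i j : ℕ, 2 * (j + (w - 1) / 2) + i + 1 = i + w + 2 * j := fun i j => by
    obtain ⟨a, rfl⟩ := hw
    omega
  simp only [hshift, cast_descFactorial_add_cast_descFactorial]
  have hdeg (j : Fin (m + 1)) : (lambdaPoly ℝ w (2 * j)).degree = ↑(2 * (j : ℕ)) :=
    degree_lambdaPoly _ _
  refine det_eval_ne_zero_of_eval_sub_eq ?_ (fun j => ?_)
    (fun j => lambdaPoly_eval_neg_sub (even_two_mul _) _) (injective_sumElim_natCast_sub ?_)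
  · refine linearIndependent_of_injective_degree (fun j => ?_) fun j j' h => ?_
    · rw [ne_eq, ← degree_eq_bot, hdeg]
      exact WithBot.coe_ne_bot
    · simp only [hdeg, Nat.cast_inj] at h
      omega
  · rw [hdeg, Fintype.card_fin, Nat.cast_lt]
    omega
  · have : (0 : ℝ) ≤ w := Nat.cast_nonneg w
    linarith

/-- Fix an odd positive integer `w` and `m ≥ 0`, and set `k_j = j + (w-1)/2` for
`0 ≤ j ≤ m`. The `(m+1) × (m+1)` matrix with entries
`M i j = (2k_j+i+1)!/(2k_j+i+1−2j)! + (i+1)!/(i+1−2j)!` (falling factorials, taken to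
be `0` when the lower argument would be negative, i.e. `Nat.descFactorial`) is
invertible. -/
theorem lambda_matrix_invertible (w m : ℕ) (hw : Odd w) (hpos : 0 < w) :
    (Matrix.of fun i j : Fin (m + 1) =>
        (((2 * ((j : ℕ) + (w - 1) / 2) + (i : ℕ) + 1).descFactorial (2 * (j : ℕ)) : ℝ) +
          (((i : ℕ) + 1).descFactorial (2 * (j : ℕ)) : ℝ))).det ≠ 0 :=
  lambda_matrix_invertible_general w m hw
end

section
/- Let φ: W → W be any linear map of weight w ≥ 1 on the vector space W with basis {α_j : j ≥ 0}, given by φ(α_j) = c_j α_{j+w} for scalars c_j. Then for each m ≥ 0, the restriction of φ to the subspace W_m spanned by {α_0,…,α_m} can be expressed uniquely as a linear combination of the restrictions to W_m of the maps ψ_k defined by ψ_k(α_j) = λ_{0,2k,j,2k−w+1} α_{j+w}, where k ranges over integers with 0 ≤ 2k+1−w ≤ 2m+1. -/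
/-- `λ_{a,b,c,m}` with falling factorial quotients interpreted as `0` when the lower
argument would be negative. -/
noncomputable def lam (a b c m : ℕ) : ℂ :=
  (-1 : ℂ) ^ b * ((b + c + 1).descFactorial m : ℂ) +
    (-1 : ℂ) ^ a * ((a + c + 1).descFactorial m : ℂ)

/-!
For `n = 2k + 1 - w`, the number `λ_{0,2k,j,n}` is the value at `j` of the polynomial
`P_k(X) = (X + 2k + 1)(X + 2k) ⋯ (X + 2k + 2 - n) + (X + 1) X ⋯ (X + 2 - n)`, which has degree
exactly `n` and satisfies `P_k(-x - w - 2) = (-1)^n P_k(x)`. The admissible `k` are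
`w/2, …, w/2 + m`; their degrees `n` are distinct, at most `2m + 1`, and all of the parity of
`w + 1`, so every combination `p = ∑ t_k P_k` has the same reflection symmetry. If `p` vanishes
at `0, …, m`, it also vanishes at `-w-2, …, -w-2-m`: these are `2m + 2` roots, so `p = 0`, and
then `t = 0` because the degrees are distinct. Hence the `m + 1` vectors
`(λ_{0,2k,j,n})_{j ≤ m}` form a basis of `ℂ^{m+1}`, and the vector `(c_j)_{j ≤ m}` describing
`φ` on `W_m` has unique coordinates in it.
-/

open Polynomial Finset

theorem existsUnique_eq_sum_smul {K V ι : Type*} [Field K] [AddCommGroup V] [Module K V]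
    [FiniteDimensional K V] (S : Finset ι) {b : ι → V} (hb : LinearIndependent K fun k : S => b k)
    (hcard : #S = Module.finrank K V) (x : V) :
    ∃! t : ι → K, (∀ k ∉ S, t k = 0) ∧ x = ∑ k ∈ S, t k • b k := by
  classical
  let B := basisOfLinearIndependentOfCardEqFinrank' _ hb (by simpa using hcard)
  have hsum (t : ι → K) : ∑ k ∈ S, t k • b k = ∑ k : S, t k • B k := by
    rw [← Finset.sum_coe_sort, coe_basisOfLinearIndependentOfCardEqFinrank']
  refine ⟨fun k => if h : k ∈ S then B.repr x ⟨k, h⟩ else 0, ⟨fun k hk => dif_neg hk, ?_⟩, ?_⟩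
  · rw [hsum]
    conv_lhs => rw [← B.sum_repr x]
    simp
  · rintro t ⟨ht, rfl⟩
    funext k
    by_cases hk : k ∈ S
    · rw [dif_pos hk, hsum, B.repr_sum_self]
    · simp [hk, ht]

namespace Polynomial

theorem descPochhammer_eval_natCast_sub_one_sub {R : Type*} [CommRing R] (n : ℕ) (y : R) :
    (descPochhammer R n).eval ((n : R) - 1 - y) = (-1) ^ n * (descPochhammer R n).eval y := by
  rw [descPochhammer_eval_eq_ascPochhammer, ← ascPochhammer_eval_neg_eq_descPochhammer]
  ring_nf

theorem natDegree_descPochhammer_comp_X_add_C {R : Type*} [CommRing R] [IsDomain R] (n : ℕ)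
    (s : R) : ((descPochhammer R n).comp (X + C s)).natDegree = n := by
  simp [natDegree_comp]

theorem linearIndependent_of_natDegree_injective {R ι : Type*} [CommRing R] [IsDomain R]
    {p : ι → R[X]} (hp : ∀ i, p i ≠ 0) (hdeg : Function.Injective (natDegree ∘ p)) :
    LinearIndependent R p := by
  classical
  refine linearIndependent_iff'.mpr fun s g hsum i hi => by_contra fun hgi => ?_
  have hdegree : ∀ k, g k ≠ 0 → (g k • p k).degree = (p k).degree := fun k hk => by
    rw [smul_eq_C_mul, degree_C_mul hk]
  have hpairwise : {k | k ∈ s ∧ g k • p k ≠ 0}.Pairwise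
      (Function.onFun Ne (degree ∘ fun k => g k • p k)) := by
    rintro k ⟨-, hk⟩ l ⟨-, hl⟩ hkl
    simp only [Function.onFun, Function.comp_apply, hdegree k (left_ne_zero_of_smul hk),
      hdegree l (left_ne_zero_of_smul hl), degree_eq_natDegree (hp k), degree_eq_natDegree (hp l),
      ne_eq, Nat.cast_inj]
    exact hdeg.ne hkl
  have hsup := degree_sum_eq_of_disjoint _ s hpairwise
  rw [hsum, degree_zero, eq_comm, Finset.sup_eq_bot_iff] at hsup
  exact hp i (degree_eq_bot.mp ((hdegree i hgi).symm.trans (hsup i hi)))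

theorem eq_zero_of_eval_eq_zero_of_reflect {R : Type*} [CommRing R] [IsDomain R] [CharZero R]
    {p : R[X]} {a m : ℕ} (ha : 0 < a) (hdeg : p.natDegree ≤ 2 * m + 1)
    (hzero : ∀ j ≤ m, p.eval (j : R) = 0) (hreflect : ∀ x, p.eval x = 0 → p.eval (-x - a) = 0) :
    p = 0 := by
  have hinj : Function.Injective (Sum.elim (fun j : Fin (m + 1) => (j : R))
      (fun j : Fin (m + 1) => -(j : R) - a)) := by
    refine Function.Injective.sumElim (Nat.cast_injective.comp Fin.val_injective)
      (fun i j h => Fin.val_injective <|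
        Nat.cast_injective (R := R) (neg_injective (sub_left_injective h)))
      fun i j h => ?_
    have : ((i + j + a : ℕ) : R) = 0 := by
      push_cast
      linear_combination h
    have := Nat.cast_eq_zero.mp this
    omega
  refine eq_zero_of_natDegree_lt_card_of_eval_eq_zero p hinj ?_ (by simp; omega)
  rintro (j | j)
  · exact hzero j (by omega)
  · exact hreflect _ (hzero j (by omega))

end Polynomial

noncomputable def lamPoly (k n : ℕ) : ℂ[X] :=
  (descPochhammer ℂ n).comp (X + C (2 * k + 1 : ℂ)) + (descPochhammer ℂ n).comp (X + C 1)

theorem lam_zero_eq_lamPoly_eval (k j n : ℕ) : lam 0 (2 * k) j n = (lamPoly k n).eval (j : ℂ) := by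
  simp only [lam, lamPoly, eval_add, eval_comp, eval_X, eval_C, pow_mul, neg_one_sq,
    one_pow, pow_zero, one_mul, zero_add]
  rw [← descPochhammer_eval_eq_descFactorial, ← descPochhammer_eval_eq_descFactorial]
  push_cast
  ring_nf

theorem coeff_lamPoly_self (k n : ℕ) : (lamPoly k n).coeff n = 2 := by
  have hcoeff (s : ℂ) : ((descPochhammer ℂ n).comp (X + C s)).coeff n = 1 := by
    simpa only [natDegree_descPochhammer_comp_X_add_C] using
      ((monic_descPochhammer ℂ n).comp_X_add_C s).coeff_natDegree
  rw [lamPoly, coeff_add, hcoeff, hcoeff, one_add_one_eq_two]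

theorem lamPoly_ne_zero (k n : ℕ) : lamPoly k n ≠ 0 := fun h => by
  simpa [h] using coeff_lamPoly_self k n

theorem natDegree_lamPoly (k n : ℕ) : (lamPoly k n).natDegree = n := by
  refine natDegree_eq_of_le_of_coeff_ne_zero ((natDegree_add_le _ _).trans ?_) (by
    simp [coeff_lamPoly_self])
  simp only [natDegree_descPochhammer_comp_X_add_C, max_self, le_refl]

theorem lamPoly_eval_neg_sub {k n w : ℕ} (h : 2 * k + 1 = w + n) (x : ℂ) :
    (lamPoly k n).eval (-x - (w + 2 : ℕ)) = (-1) ^ n * (lamPoly k n).eval x := by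
  have hc : (2 * k + 1 : ℂ) = w + n := by exact_mod_cast h
  simp only [lamPoly, eval_add, eval_comp, eval_X, eval_C]
  rw [show -x - ((w + 2 : ℕ) : ℂ) + (2 * k + 1) = n - 1 - (x + 1) by
      push_cast
      linear_combination hc,
    show -x - ((w + 2 : ℕ) : ℂ) + 1 = n - 1 - (x + (2 * k + 1)) by
      push_cast
      linear_combination hc,
    descPochhammer_eval_natCast_sub_one_sub, descPochhammer_eval_natCast_sub_one_sub]
  ring

theorem linearIndependent_lam (w m : ℕ) :
    LinearIndependent ℂ fun k : Icc (w / 2) (w / 2 + m) =>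
      fun j : Fin (m + 1) => lam 0 (2 * k) j (2 * k + 1 - w) := by
  set S := Icc (w / 2) (w / 2 + m)
  have hS (k : S) : w ≤ 2 * k + 1 ∧ 2 * k + 1 - w ≤ 2 * m + 1 := by
    have := mem_Icc.mp k.2
    omega
  set P : S → ℂ[X] := fun k => lamPoly k (2 * k + 1 - w)
  have hP : LinearIndependent ℂ P := by
    refine linearIndependent_of_natDegree_injective (fun k => lamPoly_ne_zero _ _) fun k l h => ?_
    have := hS k
    have := hS l
    simp only [P, Function.comp_apply, natDegree_lamPoly] at h
    exact Subtype.ext (by omega)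
  have hPreflect (k : S) (x : ℂ) :
      (P k).eval (-x - (w + 2 : ℕ)) = (-1) ^ (w + 1) * (P k).eval x := by
    have := hS k
    rw [lamPoly_eval_neg_sub (by omega), neg_one_pow_eq_pow_mod_two,
      show (2 * (k : ℕ) + 1 - w) % 2 = (w + 1) % 2 by omega, ← neg_one_pow_eq_pow_mod_two]
  rw [Fintype.linearIndependent_iff] at hP ⊢
  intro g hg
  refine hP g (eq_zero_of_eval_eq_zero_of_reflect (a := w + 2) (m := m) (by omega) ?_ ?_ ?_)
  · refine natDegree_sum_le_of_forall_le _ _ fun k _ => (natDegree_smul_le _ _).trans ?_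
    simpa only [P, natDegree_lamPoly] using (hS k).2
  · intro j hj
    simpa [eval_finsetSum, lam_zero_eq_lamPoly_eval, P] using congrFun hg ⟨j, by omega⟩
  · intro x hx
    simp only [eval_finsetSum, eval_smul, smul_eq_mul] at hx ⊢
    simp only [hPreflect, mul_left_comm _ ((-1 : ℂ) ^ (w + 1)), ← mul_sum, hx, mul_zero]

theorem weight_map_unique_combination_general (w m : ℕ) (c : ℕ → ℂ)
    (φ : (ℕ →₀ ℂ) →ₗ[ℂ] (ℕ →₀ ℂ))
    (hφ : ∀ j : ℕ, φ (Finsupp.single j 1) = c j • Finsupp.single (j + w) 1)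
    (ψ : ℕ → ((ℕ →₀ ℂ) →ₗ[ℂ] (ℕ →₀ ℂ)))
    (hψ : ∀ k j : ℕ,
      ψ k (Finsupp.single j 1) = lam 0 (2 * k) j (2 * k + 1 - w) • Finsupp.single (j + w) 1) :
    ∃! t : ℕ → ℂ,
      (∀ k, k ∉ (Finset.range (m + w + 1)).filter
          (fun k => w ≤ 2 * k + 1 ∧ 2 * k + 1 ≤ 2 * m + 1 + w) → t k = 0) ∧
      ∀ j : ℕ, j ≤ m →
        φ (Finsupp.single j 1) =
          ∑ k ∈ (Finset.range (m + w + 1)).filter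
              (fun k => w ≤ 2 * k + 1 ∧ 2 * k + 1 ≤ 2 * m + 1 + w),
            t k • ψ k (Finsupp.single j 1) := by
  have hS : (range (m + w + 1)).filter (fun k => w ≤ 2 * k + 1 ∧ 2 * k + 1 ≤ 2 * m + 1 + w) =
      Icc (w / 2) (w / 2 + m) := by
    ext k
    simp only [mem_filter, mem_range, mem_Icc]
    omega
  rw [hS]
  have hcoeff (t : ℕ → ℂ) (j : ℕ) : φ (Finsupp.single j 1) =
        ∑ k ∈ Icc (w / 2) (w / 2 + m), t k • ψ k (Finsupp.single j 1) ↔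
      c j = ∑ k ∈ Icc (w / 2) (w / 2 + m), t k * lam 0 (2 * k) j (2 * k + 1 - w) := by
    simp only [hφ, hψ, smul_smul, ← sum_smul]
    exact (smul_left_injective ℂ (Finsupp.single_ne_zero.mpr one_ne_zero)).eq_iff
  refine (existsUnique_congr fun t => and_congr_right' ?_).mp <|
    existsUnique_eq_sum_smul _ (b := fun k (j : Fin (m + 1)) => lam 0 (2 * k) j (2 * k + 1 - w))
      (linearIndependent_lam w m) (by simp only [Nat.card_Icc, Module.finrank_fin_fun]; omega)
      fun j => c j
  simp only [hcoeff, funext_iff, Finset.sum_apply, Pi.smul_apply, smul_eq_mul, Fin.forall_iff]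
  exact forall_congr' fun j => ⟨fun h hj => h (by omega), fun h hj => h (by omega)⟩

/-- Let `W` be the complex vector space with basis `{α_j : j ≥ 0}`, modelled as
`ℕ →₀ ℂ` with `α_j = Finsupp.single j 1`.  Let `φ` be a linear map of weight `w ≥ 1`
with `φ(α_j) = c_j α_{j+w}`, and let `ψ_k` be the maps
`ψ_k(α_j) = λ_{0,2k,j,2k+1−w} α_{j+w}` (the Fourier modes `j^{2k}(2k−w+1)`).
Then the restriction of `φ` to `W_m = span{α_0,…,α_m}` can be written uniquely as a
linear combination of the restrictions of the `ψ_k` with `0 ≤ 2k+1−w ≤ 2m+1`. -/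
theorem weight_map_unique_combination (w m : ℕ) (hw : 1 ≤ w) (c : ℕ → ℂ)
    (φ : (ℕ →₀ ℂ) →ₗ[ℂ] (ℕ →₀ ℂ))
    (hφ : ∀ j : ℕ, φ (Finsupp.single j 1) = c j • Finsupp.single (j + w) 1)
    (ψ : ℕ → ((ℕ →₀ ℂ) →ₗ[ℂ] (ℕ →₀ ℂ)))
    (hψ : ∀ k j : ℕ,
      ψ k (Finsupp.single j 1) = lam 0 (2 * k) j (2 * k + 1 - w) • Finsupp.single (j + w) 1) :
    ∃! t : ℕ → ℂ,
      (∀ k, k ∉ (Finset.range (m + w + 1)).filter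
          (fun k => w ≤ 2 * k + 1 ∧ 2 * k + 1 ≤ 2 * m + 1 + w) → t k = 0) ∧
      ∀ j : ℕ, j ≤ m →
        φ (Finsupp.single j 1) =
          ∑ k ∈ (Finset.range (m + w + 1)).filter
              (fun k => w ≤ 2 * k + 1 ∧ 2 * k + 1 ≤ 2 * m + 1 + w),
            t k • ψ k (Finsupp.single j 1) :=
  weight_map_unique_combination_general w m c φ hφ ψ hψ
end

section
/- With the setup of the derivation action of U(A) on Sym^d(W): for any f ∈ Sym^d(W), the cyclic U(A)-module M generated by f is spanned by the elements μ·f where μ ranges over elements of U(A) of degree at most d. -/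
/-!
An operator on `W ^ d` is determined by its values on products `w₁ ⋯ w_d` with `wᵢ ∈ W`. For a
word `a₁ ⋯ a_k` in `A`, let `Θ(a)` send `w` to the sum, over injective `φ : Fin k → Fin d`, of the
product `w₁ ⋯ w_d` in which each factor `w_{φ j}` is replaced by `D a_j w_{φ j}`. Then `Θ(a) = 0`
for `k > d`, and the Leibniz rule together with `D (c * a_j) = D c ∘ D a_j` on `W` gives
`D c ∘ Θ(a) = Θ(c a) + ∑ j, Θ(a with a_j replaced by c * a_j)`. By induction on `k`, each `Θ(a)`
is a combination of words of length at most `k`, and each word is a combination of `Θ`'s;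
hence on `W ^ d` every word agrees with a combination of words of length at most `d`.
-/

/-- The span of the images in `End(R)` of the monomials of `U(A)` of degree at most `r`,
where each `a ∈ A` acts by the derivation `D a`. The empty product (degree `0`) is the
identity, corresponding to `1 ∈ U(A)`. -/
noncomputable def Efam {A R : Type*} [NonUnitalRing A] [Module ℂ A]
    [CommRing R] [Algebra ℂ R] (D : A → Derivation ℂ R R) (r : ℕ) :
    Submodule ℂ (R →ₗ[ℂ] R) :=
  Submodule.span ℂ
    {T | ∃ s : ℕ, s ≤ r ∧ ∃ a : Fin s → A,
      T = (List.ofFn fun i => (D (a i)).toLinearMap).prod}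

open Finset Function Submodule

theorem Derivation.leibniz_prod {K R M ι : Type*} [CommSemiring K] [CommSemiring R] [Algebra K R]
    [AddCommMonoid M] [Module R M] [Module K M] [DecidableEq ι]
    (δ : Derivation K R M) (s : Finset ι) (x : ι → R) :
    δ (∏ i ∈ s, x i) = ∑ i ∈ s, (∏ j ∈ s.erase i, x j) • δ (x i) := by
  induction s using Finset.induction_on with
  | empty => simp
  | insert a s ha ih =>
    rw [prod_insert ha, sum_insert ha, erase_insert ha, δ.leibniz, ih, smul_sum, add_comm]
    congr 1
    refine sum_congr rfl fun i hi => ?_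
    rw [erase_insert_of_ne (ne_of_mem_of_not_mem hi ha).symm, prod_insert (by simp [ha]),
      mul_smul]

theorem Finset.map_univ_embeddingFinSucc_symm {ι : Type*} [DecidableEq ι] {k : ℕ}
    (φ : Fin k ↪ ι) (i : {i // i ∉ Set.range φ}) :
    univ.map ((Equiv.embeddingFinSucc k ι).symm ⟨φ, i⟩) = insert i.1 (univ.map φ) := by
  ext x
  simp [Fin.exists_fin_succ, eq_comm]

section

variable {K R A : Type*} [CommRing K] [CommRing R] [Algebra K R]
variable (W : Submodule K R) (D : A → Derivation K R R) {d : ℕ}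

def wordOp {k : ℕ} (a : Fin k → A) : Module.End K R :=
  (List.ofFn fun i => (D (a i)).toLinearMap).prod

theorem wordOp_cons {k : ℕ} (c : A) (a : Fin k → A) :
    wordOp D (Fin.cons c a : Fin (k + 1) → A) = D c * wordOp D a := by
  simp [wordOp, List.ofFn_succ]

variable (d) in
def evalProd : Module.End K R →ₗ[K] (Fin d → W) → R :=
  LinearMap.pi fun w => LinearMap.applyₗ (∏ i, (w i : R))

theorem evalProd_apply (T : Module.End K R) (w : Fin d → W) :
    evalProd W d T w = T (∏ i, (w i : R)) := rfl

theorem evalProd_wordOp_cons {k : ℕ} (c : A) (a : Fin k → A) :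
    evalProd W d (wordOp D (Fin.cons c a : Fin (k + 1) → A)) =
      (D c).toLinearMap.compLeft (Fin d → W) (evalProd W d (wordOp D a)) := by
  ext w
  simp [evalProd_apply, wordOp_cons]

/-- The function `Θ(a)` of the header: `φ` puts the letters of `a` into distinct factors. -/
noncomputable def spreadWord {k : ℕ} (a : Fin k → A) : (Fin d → W) → R := fun w =>
  ∑ φ : Fin k ↪ Fin d, (∏ i ∈ (univ.map φ)ᶜ, (w i : R)) * ∏ j, D (a j) (w (φ j))

theorem spreadWord_eq_zero_of_lt {k : ℕ} (hdk : d < k) (a : Fin k → A) :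
    spreadWord W D a = (0 : (Fin d → W) → R) := by
  have := Function.Embedding.isEmpty_of_card_lt (α := Fin k) (β := Fin d) (by simpa using hdk)
  funext w
  simp [spreadWord]

theorem spreadWord_zero (a : Fin 0 → A) : spreadWord W D a = evalProd W d (wordOp D a) := by
  funext w
  simp [spreadWord, evalProd_apply, wordOp]

theorem derivation_apply_spreadWord [Mul A]
    (hmul : ∀ a b : A, ∀ x ∈ W, D (a * b) x = D a (D b x))
    {k : ℕ} (c : A) (a : Fin k → A) (w : Fin d → W) :
    D c (spreadWord W D a w) = spreadWord W D (Fin.cons c a : Fin (k + 1) → A) w +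
      ∑ j, spreadWord W D (update a j (c * a j)) w := by
  classical
  -- `D c` falling on a free factor `wᵢ` places `c` in slot `i`, and the pairs `(φ, i)` with
  -- `i ∉ range φ` are the embeddings of `Fin (k + 1)`.
  have new_slot : ∑ φ : Fin k ↪ Fin d, (∏ j, D (a j) (w (φ j))) •
      D c (∏ i ∈ (univ.map φ)ᶜ, (w i : R)) = spreadWord W D (Fin.cons c a : Fin (k + 1) → A) w := by
    rw [spreadWord, ← (Equiv.embeddingFinSucc k (Fin d)).symm.sum_comp, Fintype.sum_sigma]
    refine sum_congr rfl fun φ _ => ?_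
    rw [Derivation.leibniz_prod, smul_sum, sum_subtype _ (p := (· ∉ Set.range φ)) (by simp)]
    refine sum_congr rfl fun i _ => ?_
    rw [map_univ_embeddingFinSucc_symm, compl_insert, Equiv.coe_embeddingFinSucc_symm,
      Fin.prod_univ_succ]
    simp only [Fin.cons_zero, Fin.cons_succ, smul_eq_mul]
    ring
  have occupied_slot (φ : Fin k ↪ Fin d) : D c (∏ j, D (a j) (w (φ j))) =
      ∑ j, ∏ j', D (update a j (c * a j) j') (w (φ j')) := by
    rw [Derivation.leibniz_prod]
    refine sum_congr rfl fun j _ => ?_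
    simp_rw [apply_update (fun j' e => D e (w (φ j'))), prod_update_of_mem (mem_univ j),
      sdiff_singleton_eq_erase, hmul c (a j) _ (w (φ j)).2, smul_eq_mul, mul_comm]
  simp only [spreadWord, map_sum, Derivation.leibniz, occupied_slot, sum_add_distrib, new_slot]
  simp only [smul_eq_mul, mul_sum]
  rw [add_comm, sum_comm]

theorem compLeft_spreadWord [Mul A] (hmul : ∀ a b : A, ∀ x ∈ W, D (a * b) x = D a (D b x))
    {k : ℕ} (c : A) (a : Fin k → A) :
    (D c).toLinearMap.compLeft (Fin d → W) (spreadWord W D a) =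
      spreadWord W D (Fin.cons c a : Fin (k + 1) → A) +
        ∑ j, spreadWord W D (update a j (c * a j)) := by
  ext w
  simp [derivation_apply_spreadWord W D hmul]

/-- The image of `Efam D r` under `evalProd`, over an arbitrary base ring. -/
def wordEvals (r : ℕ) : Set ((Fin d → W) → R) :=
  {v | ∃ s ≤ r, ∃ a : Fin s → A, v = evalProd W d (wordOp D a)}

theorem wordEvals_mono {r r' : ℕ} (h : r ≤ r') :
    wordEvals W D r ⊆ (wordEvals W D r' : Set ((Fin d → W) → R)) := by
  rintro _ ⟨s, hs, a, rfl⟩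
  exact ⟨s, hs.trans h, a, rfl⟩

theorem compLeft_mem_span_wordEvals (c : A) {r : ℕ} {v : (Fin d → W) → R}
    (hv : v ∈ span K (wordEvals W D r)) :
    (D c).toLinearMap.compLeft (Fin d → W) v ∈ span K (wordEvals W D (r + 1)) := by
  refine (span_le.2 ?_ : span K (wordEvals W D r) ≤ (span K _).comap _) hv
  rintro _ ⟨s, hs, a, rfl⟩
  exact subset_span ⟨s + 1, by omega, Fin.cons c a, (evalProd_wordOp_cons W D c a).symm⟩

theorem spreadWord_mem_span_wordEvals [Mul A]
    (hmul : ∀ a b : A, ∀ x ∈ W, D (a * b) x = D a (D b x)) {k : ℕ} (a : Fin k → A) :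
    spreadWord W D a ∈ span K (wordEvals W D k : Set ((Fin d → W) → R)) := by
  induction k with
  | zero => exact subset_span ⟨0, le_rfl, a, spreadWord_zero W D a⟩
  | succ k ih =>
    rw [← Fin.cons_self_tail a,
      eq_sub_of_add_eq (compLeft_spreadWord W D hmul (a 0) (Fin.tail a)).symm]
    refine sub_mem (compLeft_mem_span_wordEvals W D _ (ih _)) (sum_mem fun j _ => ?_)
    exact span_mono (wordEvals_mono W D k.le_succ) (ih _)

theorem evalProd_wordOp_mem_span_spreadWord [Mul A]
    (hmul : ∀ a b : A, ∀ x ∈ W, D (a * b) x = D a (D b x)) {k : ℕ} (a : Fin k → A) :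
    evalProd W d (wordOp D a) ∈
      span K {v | ∃ (k : ℕ) (a : Fin k → A), v = spreadWord W D a} := by
  induction k with
  | zero => exact subset_span ⟨0, a, (spreadWord_zero W D a).symm⟩
  | succ k ih =>
    rw [← Fin.cons_self_tail a, evalProd_wordOp_cons]
    refine (span_le.2 ?_ : span K _ ≤ (span K _).comap _) (ih (Fin.tail a))
    rintro _ ⟨k, a, rfl⟩
    rw [SetLike.mem_coe, mem_comap, compLeft_spreadWord W D hmul]
    exact add_mem (subset_span ⟨_, _, rfl⟩) (sum_mem fun j _ => subset_span ⟨_, _, rfl⟩)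

theorem evalProd_wordOp_mem_span_wordEvals [Mul A]
    (hmul : ∀ a b : A, ∀ x ∈ W, D (a * b) x = D a (D b x)) {k : ℕ} (a : Fin k → A) :
    evalProd W d (wordOp D a) ∈ span K (wordEvals W D d) := by
  refine (span_le.2 ?_) (evalProd_wordOp_mem_span_spreadWord W D hmul a)
  rintro _ ⟨k, a, rfl⟩
  rcases le_or_gt k d with hkd | hdk
  · exact span_mono (wordEvals_mono W D hkd) (spreadWord_mem_span_wordEvals W D hmul a)
  · rw [spreadWord_eq_zero_of_lt W D hdk]
    exact zero_mem _

end

theorem exists_mem_Efam_eqOn_pow {A R : Type*} [NonUnitalRing A] [Module ℂ A] [CommRing R]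
    [Algebra ℂ R] (W : Submodule ℂ R) (D : A → Derivation ℂ R R)
    (hmul : ∀ a b : A, ∀ x ∈ W, D (a * b) x = D a (D b x)) {d k : ℕ} (a : Fin k → A) :
    ∃ T ∈ Efam D d, Set.EqOn (wordOp D a) T (W ^ d : Submodule ℂ R) := by
  obtain ⟨T, hT, hTa⟩ : evalProd W d (wordOp D a) ∈ (Efam D d).map (evalProd W d) := by
    refine (span_le.2 ?_) (evalProd_wordOp_mem_span_wordEvals W D hmul a)
    rintro _ ⟨s, hs, b, rfl⟩
    exact mem_map_of_mem (subset_span ⟨s, hs, b, rfl⟩)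
  refine ⟨T, hT, fun x hx => ?_⟩
  rw [SetLike.mem_coe, pow_eq_span_pow_set] at hx
  refine LinearMap.eqOn_span (fun y hy => ?_) hx
  obtain ⟨w, rfl⟩ := Set.mem_pow.1 hy
  rw [List.prod_ofFn]
  exact (congrFun hTa w).symm

theorem cyclic_module_spanned_by_degree_d_general {A R : Type*} [NonUnitalRing A] [Module ℂ A]
    [CommRing R] [Algebra ℂ R]
    (W : Submodule ℂ R) (D : A → Derivation ℂ R R)
    (hmul : ∀ a b : A, ∀ x ∈ W, D (a * b) x = D a (D b x))
    (d : ℕ) (f : R) (hf : f ∈ W ^ d) :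
    Submodule.span ℂ {x : R | ∃ r : ℕ, ∃ T ∈ Efam D r, x = T f} =
      Submodule.span ℂ {x : R | ∃ T ∈ Efam D d, x = T f} := by
  refine le_antisymm (span_le.2 ?_) (span_mono fun _ ⟨T, hT, hx⟩ => ⟨d, T, hT, hx⟩)
  rintro _ ⟨r, T, hT, rfl⟩
  induction hT using Submodule.span_induction with
  | mem T hT =>
    obtain ⟨s, -, a, rfl⟩ := hT
    obtain ⟨T', hT', hEq⟩ := exists_mem_Efam_eqOn_pow W D hmul (d := d) a
    exact subset_span ⟨T', hT', hEq hf⟩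
  | zero => exact zero_mem _
  | add T T' _ _ hT hT' => exact add_mem hT hT'
  | smul c T _ hT => exact smul_mem _ c hT

/-- With the derivation action of `U(A)` on `Sym^d(W)` (modelled as `W ^ d` inside a
commutative `ℂ`-algebra `R`): for any `f ∈ W ^ d`, the cyclic `U(A)`-module generated
by `f` is spanned by the elements `μ · f` with `μ ∈ U(A)` of degree at most `d`. -/
theorem cyclic_module_spanned_by_degree_d {A R : Type*} [NonUnitalRing A] [Module ℂ A]
    [CommRing R] [Algebra ℂ R]
    (W : Submodule ℂ R) (D : A → Derivation ℂ R R)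
    (hW : ∀ a : A, ∀ x ∈ W, D a x ∈ W)
    (hmul : ∀ a b : A, ∀ x ∈ W, D (a * b) x = D a (D b x))
    (d : ℕ) (f : R) (hf : f ∈ W ^ d) :
    Submodule.span ℂ {x : R | ∃ r : ℕ, ∃ T ∈ Efam D r, x = T f} =
      Submodule.span ℂ {x : R | ∃ T ∈ Efam D d, x = T f} :=
  cyclic_module_spanned_by_degree_d_general W D hmul d f hf
end

section
/- Let V_k for k ≥ 0 be copies of the standard O(n)-module ℂⁿ with orthonormal basis {x_{i,k} : i = 1,…,n}. The invariant ring (Sym ⊕_{k≥0} V_k)^{O(n)} is generated as a commutative ℂ-algebra by the quadratics q_{a,b} = Σ_{i=1}^n x_{i,a} x_{i,b} for 0 ≤ a ≤ b. -/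
/-!
Induction on `n`, allowing extra variables on which `O(n)` acts trivially. Let `p` be
`O(n+1)`-invariant and pick a vector slot `k₀` on which `p` does not depend. Embedding `O(n)` in
`O(n+1)` as the stabiliser of the first coordinate, the induction hypothesis writes `p` as a
polynomial in the first coordinates `x_{0,k}`, the extra variables and the partial quadratics
`q_{a,b} - x_{0,a} x_{0,b}`. At a point `x` with `q_{k₀,k₀}(x) = τ² ≠ 0`, a reflection moves the
`k₀`-th vector of `x` to `τ e₀`; since `p` is invariant, `p(x)` is then obtained by substituting
`x_{0,k} = q_{k₀,k}(x) / τ`. Clearing denominators and averaging over the two signs of `τ` gives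
`q_{k₀,k₀}^N p ∈ ℂ[q]`. The Laplacian in the `k₀`-th vector preserves `ℂ[q]`, and since `p` is
free of that vector, `Δ^N (q_{k₀,k₀}^N p)` is a nonzero multiple of `p`.
-/

open MvPolynomial Matrix

noncomputable section

namespace WeylFFT

section Orthogonal

variable {ι R K : Type*} [Fintype ι] [DecidableEq ι] [CommRing R] [Field K]

theorem dotProduct_mulVec_mulVec_of_transpose_mul_self {A : Matrix ι ι R} (hA : Aᵀ * A = 1)
    (y z : ι → R) : (A *ᵥ y) ⬝ᵥ (A *ᵥ z) = y ⬝ᵥ z := by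
  rw [dotProduct_mulVec, ← vecMul_transpose, vecMul_vecMul, hA, vecMul_one]

theorem transpose_map_mul_map_eq_one {S : Type*} [CommRing S] (f : R →+* S) {A : Matrix ι ι R}
    (hA : Aᵀ * A = 1) : (A.map f)ᵀ * A.map f = 1 := by
  rw [← transpose_map, ← Matrix.map_mul, hA, Matrix.map_one f f.map_zero f.map_one]

def householder (w : ι → K) : Matrix ι ι K := 1 - (2 / (w ⬝ᵥ w)) • vecMulVec w w

theorem householder_transpose_mul_self {w : ι → K} (hw : w ⬝ᵥ w ≠ 0) :
    (householder w)ᵀ * householder w = 1 := by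
  have hcoeff : 2 / (w ⬝ᵥ w) * (2 / (w ⬝ᵥ w)) * (w ⬝ᵥ w) = 2 * (2 / (w ⬝ᵥ w)) := by
    field_simp
  simp only [householder, transpose_sub, transpose_one, transpose_smul, transpose_vecMulVec,
    sub_mul, mul_sub, one_mul, mul_one, smul_mul_smul_comm, vecMulVec_mul_vecMulVec,
    vecMulVec_smul, smul_smul, hcoeff]
  module

theorem householder_mulVec (w x : ι → K) :
    householder w *ᵥ x = x - (2 * (w ⬝ᵥ x) / (w ⬝ᵥ w)) • w := by
  simp [householder, sub_mulVec, smul_mulVec, vecMulVec_mulVec, smul_smul, mul_div_right_comm]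

theorem householder_sub_mulVec {a b : ι → K} (hab : a ⬝ᵥ a = b ⬝ᵥ b)
    (h : (a - b) ⬝ᵥ (a - b) ≠ 0) : householder (a - b) *ᵥ a = b := by
  have h2 : 2 * ((a - b) ⬝ᵥ a) = (a - b) ⬝ᵥ (a - b) := by
    simp only [sub_dotProduct, dotProduct_sub, dotProduct_comm b a, hab]
    ring
  rw [householder_mulVec, h2, div_self h, one_smul, sub_sub_cancel]

theorem exists_transpose_mul_self_eq_one_mulVec_eq [NeZero (2 : K)] {a b : ι → K}
    (hab : a ⬝ᵥ a = b ⬝ᵥ b) (ha : a ⬝ᵥ a ≠ 0) :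
    ∃ M : Matrix ι ι K, Mᵀ * M = 1 ∧ M *ᵥ a = b := by
  have hsum : (a - b) ⬝ᵥ (a - b) + (a - -b) ⬝ᵥ (a - -b) = 2 * 2 * (a ⬝ᵥ a) := by
    simp only [sub_neg_eq_add, sub_dotProduct, dotProduct_sub, add_dotProduct, dotProduct_add,
      dotProduct_comm b a, ← hab]
    ring
  by_cases hminus : (a - b) ⬝ᵥ (a - b) = 0
  · -- then `a + b` is anisotropic, and `-householder (a + b)` sends `a` to `b`
    have hplus : (a - -b) ⬝ᵥ (a - -b) ≠ 0 := by
      rw [hminus, zero_add] at hsum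
      rw [hsum]
      exact mul_ne_zero (mul_ne_zero two_ne_zero two_ne_zero) ha
    refine ⟨-householder (a - -b), ?_, ?_⟩
    · rw [transpose_neg, neg_mul_neg, householder_transpose_mul_self hplus]
    · rw [neg_mulVec, householder_sub_mulVec (by rw [hab, neg_dotProduct_neg]) hplus, neg_neg]
  · exact ⟨householder (a - b), householder_transpose_mul_self hminus,
      householder_sub_mulVec hab hminus⟩

end Orthogonal

section Laplacian

variable {R σ ι : Type*} [CommRing R] [Fintype ι] (e : ι → σ)

def gradPairing (f : MvPolynomial σ R) : Derivation R (MvPolynomial σ R) (MvPolynomial σ R) :=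
  ∑ i, pderiv (e i) f • pderiv (e i)

def laplacian : Module.End R (MvPolynomial σ R) :=
  ∑ i, (pderiv (e i)).toLinearMap * (pderiv (e i)).toLinearMap

def normSq : MvPolynomial σ R := ∑ i, X (e i) * X (e i)

variable {e}

theorem gradPairing_apply (f g : MvPolynomial σ R) :
    gradPairing e f g = ∑ i, pderiv (e i) f * pderiv (e i) g := by
  rw [gradPairing, ← Derivation.coeFnAddMonoidHom_apply, map_sum, Finset.sum_apply]
  rfl

theorem gradPairing_comm (f g : MvPolynomial σ R) : gradPairing e f g = gradPairing e g f := by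
  simp only [gradPairing_apply, mul_comm]

theorem laplacian_apply (f : MvPolynomial σ R) :
    laplacian e f = ∑ i, pderiv (e i) (pderiv (e i) f) := by
  simp [laplacian]

theorem laplacian_mul (f g : MvPolynomial σ R) :
    laplacian e (f * g) = f * laplacian e g + g * laplacian e f + 2 * gradPairing e f g := by
  simp only [laplacian_apply, gradPairing_apply, Derivation.leibniz, map_add, smul_eq_mul,
    Finset.mul_sum, ← Finset.sum_add_distrib]
  refine Finset.sum_congr rfl fun i _ => ?_
  ring

theorem pderiv_normSq (he : Function.Injective e) (i : ι) :
    pderiv (e i) (normSq e : MvPolynomial σ R) = 2 * X (e i) := by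
  classical
  simp [normSq, pderiv_X, Pi.single_apply, he.eq_iff, Finset.sum_add_distrib, two_mul]

theorem gradPairing_normSq_pow (he : Function.Injective e) (m : ℕ) :
    gradPairing e (normSq e) (normSq e ^ m : MvPolynomial σ R) = (4 * m) • normSq e ^ m := by
  induction m with
  | zero => simp
  | succ m ih =>
    have hqq : gradPairing e (normSq e) (normSq e : MvPolynomial σ R) = 4 * normSq e := by
      simp_rw [gradPairing_apply, pderiv_normSq he]
      rw [normSq, Finset.mul_sum]
      exact Finset.sum_congr rfl fun i _ => by ring
    rw [pow_succ, Derivation.leibniz, ih, hqq, smul_eq_mul, smul_eq_mul, nsmul_eq_mul,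
      nsmul_eq_mul]
    push_cast
    ring

theorem laplacian_normSq (he : Function.Injective e) :
    laplacian e (normSq e : MvPolynomial σ R) = 2 * Fintype.card ι := by
  have h2 : ∀ i, pderiv (e i) (2 : MvPolynomial σ R) = 0 := fun i => by
    simpa using (pderiv (e i)).map_natCast 2
  simp [laplacian_apply, pderiv_normSq he, h2, mul_comm]

theorem laplacian_normSq_pow_succ (he : Function.Injective e) (m : ℕ) :
    laplacian e (normSq e ^ (m + 1) : MvPolynomial σ R) =
      (2 * (m + 1) * (Fintype.card ι + 2 * m)) • normSq e ^ m := by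
  induction m with
  | zero => simp [laplacian_normSq he]
  | succ m ih =>
    rw [pow_succ', laplacian_mul, ih, gradPairing_normSq_pow he, laplacian_normSq he]
    simp only [nsmul_eq_mul]
    push_cast
    ring

theorem laplacian_normSq_pow_succ_mul (he : Function.Injective e) {g : MvPolynomial σ R}
    (hg : ∀ i, pderiv (e i) g = 0) (m : ℕ) :
    laplacian e (normSq e ^ (m + 1) * g) =
      (2 * (m + 1) * (Fintype.card ι + 2 * m)) • (normSq e ^ m * g) := by
  have hΔg : laplacian e g = 0 := by simp [laplacian_apply, hg]
  have hΓg : gradPairing e (normSq e ^ (m + 1)) g = 0 := by simp [gradPairing_apply, hg]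
  rw [laplacian_mul, hΔg, hΓg, laplacian_normSq_pow_succ he, mul_zero, zero_add, mul_zero,
    add_zero, mul_smul_comm, mul_comm g]

theorem laplacian_pow_normSq_pow_mul (he : Function.Injective e) {g : MvPolynomial σ R}
    (hg : ∀ i, pderiv (e i) g = 0) (N : ℕ) :
    (laplacian e ^ N) (normSq e ^ N * g) =
      (∏ m ∈ Finset.range N, 2 * (m + 1) * (Fintype.card ι + 2 * m)) • g := by
  induction N with
  | zero => simp
  | succ N ih =>
    rw [pow_succ, Module.End.mul_apply, laplacian_normSq_pow_succ_mul he hg, map_nsmul, ih,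
      smul_smul, Finset.prod_range_succ, mul_comm]

theorem derivation_apply_mem_adjoin {A : Type*} [CommRing A] [Algebra R A]
    (D : Derivation R A A) {S : Set A} (hS : ∀ s ∈ S, D s ∈ Algebra.adjoin R S) {f : A}
    (hf : f ∈ Algebra.adjoin R S) : D f ∈ Algebra.adjoin R S := by
  induction hf using Algebra.adjoin_induction with
  | mem s hs => exact hS s hs
  | algebraMap r => simp
  | add f g _ _ hf hg => rw [map_add]; exact add_mem hf hg
  | mul f g hf' hg' hf hg =>
    rw [D.leibniz, smul_eq_mul, smul_eq_mul]
    exact add_mem (mul_mem hf' hg) (mul_mem hg' hf)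

variable {S : Set (MvPolynomial σ R)}

theorem gradPairing_mem_adjoin (hS : ∀ s ∈ S, ∀ t ∈ S, gradPairing e s t ∈ Algebra.adjoin R S)
    {f g : MvPolynomial σ R} (hf : f ∈ Algebra.adjoin R S) (hg : g ∈ Algebra.adjoin R S) :
    gradPairing e f g ∈ Algebra.adjoin R S := by
  have hSg : ∀ s ∈ S, gradPairing e g s ∈ Algebra.adjoin R S := fun s hs => by
    rw [gradPairing_comm]
    exact derivation_apply_mem_adjoin _ (hS s hs) hg
  rw [gradPairing_comm]
  exact derivation_apply_mem_adjoin _ hSg hf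

theorem laplacian_mem_adjoin (hΓ : ∀ s ∈ S, ∀ t ∈ S, gradPairing e s t ∈ Algebra.adjoin R S)
    (hΔ : ∀ s ∈ S, laplacian e s ∈ Algebra.adjoin R S) {f : MvPolynomial σ R}
    (hf : f ∈ Algebra.adjoin R S) : laplacian e f ∈ Algebra.adjoin R S := by
  induction hf using Algebra.adjoin_induction with
  | mem s hs => exact hΔ s hs
  | algebraMap r => simp [laplacian_apply]
  | add f g _ _ hf hg => rw [map_add]; exact add_mem hf hg
  | mul f g hf' hg' hf hg =>
    rw [laplacian_mul]
    exact add_mem (add_mem (mul_mem hf' hg) (mul_mem hg' hf))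
      (mul_mem (ofNat_mem _ 2) (gradPairing_mem_adjoin hΓ hf' hg'))

end Laplacian

section Slots

/- The variable `x_{i,k}` is `X (v (i, k))`; the variables outside the range of `v` are fixed by
`O(n)`. -/
variable {σ A K : Type*} {n : ℕ} (v : Fin n × ℕ → σ)

def slot (x : σ → A) (k : ℕ) : Fin n → A := fun i => x (v (i, k))

def orthAction [CommRing A] (M : Matrix (Fin n) (Fin n) A) (x : σ → A) : σ → A :=
  Function.extend v (fun ik => (M *ᵥ slot v x ik.2) ik.1) x

variable [CommRing K]

def innerQ (a b : ℕ) : MvPolynomial σ K := slot v X a ⬝ᵥ slot v X b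

variable (K) in
def invariantGens : Set (MvPolynomial σ K) :=
  X '' (Set.range v)ᶜ ∪ Set.range fun ab : ℕ × ℕ => innerQ v ab.1 ab.2

def IsOrthInvariant (p : MvPolynomial σ K) : Prop :=
  ∀ M : Matrix (Fin n) (Fin n) K, Mᵀ * M = 1 → aeval (orthAction v (M.map C) X) p = p

theorem innerQ_mem_adjoin (a b : ℕ) :
    (innerQ v a b : MvPolynomial σ K) ∈ Algebra.adjoin K (invariantGens K v) :=
  Algebra.subset_adjoin (Or.inr ⟨(a, b), rfl⟩)

variable {v}

theorem slot_orthAction [CommRing A] (hv : Function.Injective v) (M : Matrix (Fin n) (Fin n) A)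
    (x : σ → A) (k : ℕ) : slot v (orthAction v M x) k = M *ᵥ slot v x k :=
  _root_.funext fun i => hv.extend_apply (fun ik => (M *ᵥ slot v x ik.2) ik.1) x (i, k)

theorem orthAction_of_notMem [CommRing A] (M : Matrix (Fin n) (Fin n) A) (x : σ → A) {s : σ}
    (hs : s ∉ Set.range v) : orthAction v M x s = x s :=
  Function.extend_apply' _ _ _ hs

theorem dotProduct_slot_orthAction [CommRing A] (hv : Function.Injective v)
    {M : Matrix (Fin n) (Fin n) A} (hM : Mᵀ * M = 1) (x : σ → A) (a b : ℕ) :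
    slot v (orthAction v M x) a ⬝ᵥ slot v (orthAction v M x) b = slot v x a ⬝ᵥ slot v x b := by
  rw [slot_orthAction hv, slot_orthAction hv, dotProduct_mulVec_mulVec_of_transpose_mul_self hM]

theorem aeval_innerQ [CommRing A] [Algebra K A] (x : σ → A) (a b : ℕ) :
    aeval x (innerQ v a b : MvPolynomial σ K) = slot v x a ⬝ᵥ slot v x b := by
  simp [innerQ, dotProduct, slot]

theorem eval_innerQ (x : σ → K) (a b : ℕ) :
    eval x (innerQ v a b) = slot v x a ⬝ᵥ slot v x b := by
  simp [innerQ, dotProduct, slot]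

theorem eval_aeval_orthAction (M : Matrix (Fin n) (Fin n) K) (x : σ → K) (p : MvPolynomial σ K) :
    eval x (aeval (orthAction v (M.map C) X) p) = eval (orthAction v M x) p := by
  have hvec : (eval x ∘ fun ik : Fin n × ℕ => (M.map C *ᵥ slot v X ik.2) ik.1) =
      fun ik => (M *ᵥ slot v x ik.2) ik.1 := by
    ext ⟨i, k⟩
    simp [mulVec, dotProduct, slot]
  have hpt : (fun s => eval x (orthAction v (M.map C) X s)) = orthAction v M x := by
    ext s
    rw [orthAction, Function.apply_extend (eval x), hvec, show eval x ∘ X = x from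
      _root_.funext fun s => eval_X s]
    rfl
  rw [← hpt, aeval_eq_bind₁]
  exact eval₂Hom_bind₁ (RingHom.id K) x _ p

theorem eval_orthAction_of_isOrthInvariant {p : MvPolynomial σ K} (hp : IsOrthInvariant v p)
    {M : Matrix (Fin n) (Fin n) K} (hM : Mᵀ * M = 1) (x : σ → K) :
    eval (orthAction v M x) p = eval x p := by
  rw [← eval_aeval_orthAction, hp M hM]

theorem isOrthInvariant_of_mem_adjoin (hv : Function.Injective v) {p : MvPolynomial σ K}
    (hp : p ∈ Algebra.adjoin K (invariantGens K v)) : IsOrthInvariant v p := by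
  intro M hM
  suffices Algebra.adjoin K (invariantGens K v) ≤
      AlgHom.equalizer (aeval (orthAction v (M.map C) X)) (AlgHom.id K _) from this hp
  refine Algebra.adjoin_le ?_
  rintro _ (⟨s, hs, rfl⟩ | ⟨⟨a, b⟩, rfl⟩)
  · simp [orthAction_of_notMem _ _ hs]
  · change aeval _ (innerQ v a b) = innerQ v a b
    rw [aeval_innerQ, dotProduct_slot_orthAction hv (transpose_map_mul_map_eq_one C hM)]
    rfl

end Slots

section Restriction

variable {σ A B K : Type*} {n : ℕ}

def blockDiagOne [Zero A] [One A] (M : Matrix (Fin n) (Fin n) A) :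
    Matrix (Fin (n + 1)) (Fin (n + 1)) A :=
  Matrix.of (Fin.cons (Pi.single 0 1) fun i => Fin.cons 0 (M i))

theorem blockDiagOne_map [CommRing A] [CommRing B] (f : A →+* B) (M : Matrix (Fin n) (Fin n) A) :
    (blockDiagOne M).map f = blockDiagOne (M.map f) := by
  ext i j
  refine Fin.cases ?_ (fun i => ?_) i <;> refine Fin.cases ?_ (fun j => ?_) j <;>
    simp [blockDiagOne]

theorem blockDiagOne_transpose_mul_self [CommRing A] {M : Matrix (Fin n) (Fin n) A}
    (hM : Mᵀ * M = 1) : (blockDiagOne M)ᵀ * blockDiagOne M = 1 := by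
  ext i j
  refine Fin.cases ?_ (fun i => ?_) i <;> refine Fin.cases ?_ (fun j => ?_) j
  · simp [blockDiagOne, mul_apply, Fin.sum_univ_succ]
  · simp [blockDiagOne, mul_apply, Fin.sum_univ_succ, one_apply, (Fin.succ_ne_zero j).symm]
  · simp [blockDiagOne, mul_apply, Fin.sum_univ_succ, one_apply]
  · simpa [blockDiagOne, mul_apply, Fin.sum_univ_succ, one_apply] using congrFun₂ hM i j

variable (v : Fin (n + 1) × ℕ → σ)

def tailRows : Fin n × ℕ → σ := fun ik => v (ik.1.succ, ik.2)

variable {v}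

theorem tailRows_injective (hv : Function.Injective v) : Function.Injective (tailRows v) :=
  fun _ _ h => by simpa [Prod.ext_iff] using hv h

theorem orthAction_tailRows [CommRing A] (hv : Function.Injective v)
    (M : Matrix (Fin n) (Fin n) A) (x : σ → A) :
    orthAction (tailRows v) M x = orthAction v (blockDiagOne M) x := by
  ext s
  by_cases hs : s ∈ Set.range v
  · obtain ⟨⟨i, k⟩, rfl⟩ := hs
    rw [orthAction, orthAction, hv.extend_apply]
    refine Fin.cases ?_ (fun i => ?_) i
    · rw [Function.extend_apply']
      · simp [blockDiagOne, mulVec, dotProduct, Fin.sum_univ_succ, slot]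
      · rintro ⟨⟨j, l⟩, h⟩
        exact Fin.succ_ne_zero j (congrArg Prod.fst (hv h))
    · exact (tailRows_injective hv).extend_apply _ _ (i, k) |>.trans
        (by simp [blockDiagOne, mulVec, dotProduct, Fin.sum_univ_succ, slot, tailRows])
  · rw [orthAction_of_notMem _ _ hs, orthAction_of_notMem]
    rintro ⟨⟨i, k⟩, rfl⟩
    exact hs ⟨_, rfl⟩

theorem isOrthInvariant_tailRows [CommRing K] (hv : Function.Injective v)
    {p : MvPolynomial σ K} (hp : IsOrthInvariant v p) : IsOrthInvariant (tailRows v) p := by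
  intro M hM
  rw [orthAction_tailRows hv, ← blockDiagOne_map]
  exact hp _ (blockDiagOne_transpose_mul_self hM)

theorem innerQ_eq_add_innerQ_tailRows [CommRing K] (a b : ℕ) :
    (innerQ v a b : MvPolynomial σ K) = X (v (0, a)) * X (v (0, b)) + innerQ (tailRows v) a b := by
  rw [innerQ, dotProduct, Fin.sum_univ_succ]
  rfl

end Restriction

section Clearing

variable {σ K : Type*} [CommRing K] {n : ℕ} {v : Fin (n + 1) × ℕ → σ} {k₀ : ℕ}

theorem innerQ_self_ne_zero [Nontrivial K] (hv : Function.Injective v) (k : ℕ) :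
    (innerQ v k k : MvPolynomial σ K) ≠ 0 := by
  classical
  intro h
  have h1 := congrArg (eval fun s => if s = v (0, k) then (1 : K) else 0) h
  simp [eval_innerQ, dotProduct, slot, hv.eq_iff] at h1

theorem mul_orthAction_apply_zero (hv : Function.Injective v)
    {M : Matrix (Fin (n + 1)) (Fin (n + 1)) K} (hM : Mᵀ * M = 1) {x : σ → K} {τ : K}
    (hMx : M *ᵥ slot v x k₀ = Pi.single 0 τ) (k : ℕ) :
    τ * orthAction v M x (v (0, k)) = eval x (innerQ v k₀ k) := by
  calc τ * orthAction v M x (v (0, k)) = Pi.single 0 τ ⬝ᵥ slot v (orthAction v M x) k := by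
        rw [single_dotProduct]; rfl
    _ = eval x (innerQ v k₀ k) := by
        rw [← hMx, slot_orthAction hv, dotProduct_mulVec_mulVec_of_transpose_mul_self hM,
          eval_innerQ]

theorem sq_eq_eval_innerQ (hv : Function.Injective v)
    {M : Matrix (Fin (n + 1)) (Fin (n + 1)) K} (hM : Mᵀ * M = 1) {x : σ → K} {τ : K}
    (hMx : M *ᵥ slot v x k₀ = Pi.single 0 τ) : τ ^ 2 = eval x (innerQ v k₀ k₀) := by
  have h0 : orthAction v M x (v (0, k₀)) = τ := by
    simpa [slot] using congrFun ((slot_orthAction hv M x k₀).trans hMx) 0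
  rw [← mul_orthAction_apply_zero hv hM hMx, h0, sq]

variable (v) in
/-- `τ` is a square root of `q_{k₀,k₀}(x)` and `orthAction v M x` is `x` rotated so that its
`k₀`-th vector is `τ e₀`. The odd part `O` is removed later by comparing `τ` with `-τ`. -/
def IsClearable (k₀ : ℕ) (f : MvPolynomial σ K) : Prop :=
  ∃ N : ℕ, ∃ E ∈ Algebra.adjoin K (invariantGens K v), ∃ O ∈ Algebra.adjoin K (invariantGens K v),
    ∀ (M : Matrix (Fin (n + 1)) (Fin (n + 1)) K) (x : σ → K) (τ : K),
      Mᵀ * M = 1 → M *ᵥ slot v x k₀ = Pi.single 0 τ →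
        eval x (innerQ v k₀ k₀) ^ N * eval (orthAction v M x) f = eval x E + τ * eval x O

theorem isClearable_algebraMap (c : K) : IsClearable v k₀ (algebraMap K (MvPolynomial σ K) c) :=
  ⟨0, algebraMap K _ c, Subalgebra.algebraMap_mem _ c, 0, zero_mem _,
    fun M x τ _ _ => by simp⟩

theorem IsClearable.add {f g : MvPolynomial σ K} (hf : IsClearable v k₀ f)
    (hg : IsClearable v k₀ g) : IsClearable v k₀ (f + g) := by
  obtain ⟨N₁, E₁, hE₁, O₁, hO₁, h₁⟩ := hf
  obtain ⟨N₂, E₂, hE₂, O₂, hO₂, h₂⟩ := hg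
  have hq := innerQ_mem_adjoin v k₀ k₀ (K := K)
  refine ⟨N₁ + N₂, innerQ v k₀ k₀ ^ N₂ * E₁ + innerQ v k₀ k₀ ^ N₁ * E₂,
    add_mem (mul_mem (pow_mem hq _) hE₁) (mul_mem (pow_mem hq _) hE₂),
    innerQ v k₀ k₀ ^ N₂ * O₁ + innerQ v k₀ k₀ ^ N₁ * O₂,
    add_mem (mul_mem (pow_mem hq _) hO₁) (mul_mem (pow_mem hq _) hO₂), fun M x τ hM hMx => ?_⟩
  simp only [map_add, map_mul, map_pow]
  linear_combination eval x (innerQ v k₀ k₀) ^ N₂ * h₁ M x τ hM hMx +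
    eval x (innerQ v k₀ k₀) ^ N₁ * h₂ M x τ hM hMx

theorem IsClearable.mul (hv : Function.Injective v) {f g : MvPolynomial σ K}
    (hf : IsClearable v k₀ f) (hg : IsClearable v k₀ g) : IsClearable v k₀ (f * g) := by
  obtain ⟨N₁, E₁, hE₁, O₁, hO₁, h₁⟩ := hf
  obtain ⟨N₂, E₂, hE₂, O₂, hO₂, h₂⟩ := hg
  have hq := innerQ_mem_adjoin v k₀ k₀ (K := K)
  refine ⟨N₁ + N₂, E₁ * E₂ + innerQ v k₀ k₀ * O₁ * O₂,
    add_mem (mul_mem hE₁ hE₂) (mul_mem (mul_mem hq hO₁) hO₂), E₁ * O₂ + O₁ * E₂,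
    add_mem (mul_mem hE₁ hO₂) (mul_mem hO₁ hE₂), fun M x τ hM hMx => ?_⟩
  simp only [map_add, map_mul]
  linear_combination (eval x (innerQ v k₀ k₀) ^ N₂ * eval (orthAction v M x) g) *
    h₁ M x τ hM hMx + (eval x E₁ + τ * eval x O₁) * h₂ M x τ hM hMx +
    eval x O₁ * eval x O₂ * sq_eq_eval_innerQ hv hM hMx

theorem isClearable_X_of_notMem {s : σ} (hs : s ∉ Set.range v) :
    IsClearable v k₀ (X s : MvPolynomial σ K) :=
  ⟨0, X s, Algebra.subset_adjoin (Or.inl ⟨s, hs, rfl⟩), 0, zero_mem _,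
    fun M x τ _ _ => by simp [orthAction_of_notMem _ _ hs]⟩

theorem isClearable_X_zero (hv : Function.Injective v) (k : ℕ) :
    IsClearable v k₀ (X (v (0, k)) : MvPolynomial σ K) :=
  ⟨1, 0, zero_mem _, innerQ v k₀ k, innerQ_mem_adjoin v k₀ k, fun M x τ hM hMx => by
    rw [eval_X, map_zero, ← sq_eq_eval_innerQ hv hM hMx]
    linear_combination τ * mul_orthAction_apply_zero hv hM hMx k⟩

theorem isClearable_innerQ_tailRows (hv : Function.Injective v) (a b : ℕ) :
    IsClearable v k₀ (innerQ (tailRows v) a b : MvPolynomial σ K) := by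
  have hq := innerQ_mem_adjoin v (K := K)
  refine ⟨1, innerQ v k₀ k₀ * innerQ v a b - innerQ v k₀ a * innerQ v k₀ b,
    sub_mem (mul_mem (hq _ _) (hq _ _)) (mul_mem (hq _ _) (hq _ _)), 0, zero_mem _,
    fun M x τ hM hMx => ?_⟩
  have hab : eval (orthAction v M x) (innerQ v a b) = eval x (innerQ v a b) := by
    rw [eval_innerQ, eval_innerQ, dotProduct_slot_orthAction hv hM]
  have hsplit := congrArg (eval (orthAction v M x)) (innerQ_eq_add_innerQ_tailRows a b (v := v))
  simp only [map_add, map_mul, eval_X, hab] at hsplit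
  simp only [map_sub, map_mul, map_zero, pow_one]
  linear_combination (-eval x (innerQ v k₀ k₀)) * hsplit +
    (orthAction v M x (v (0, a)) * orthAction v M x (v (0, b))) * sq_eq_eval_innerQ hv hM hMx -
    τ * orthAction v M x (v (0, b)) * mul_orthAction_apply_zero hv hM hMx a -
    eval x (innerQ v k₀ a) * mul_orthAction_apply_zero hv hM hMx b

theorem isClearable_of_mem_adjoin (hv : Function.Injective v) (k₀ : ℕ) {f : MvPolynomial σ K}
    (hf : f ∈ Algebra.adjoin K (invariantGens K (tailRows v))) : IsClearable v k₀ f := by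
  induction hf using Algebra.adjoin_induction with
  | mem f hf =>
    rcases hf with ⟨s, hs, rfl⟩ | ⟨⟨a, b⟩, rfl⟩
    · by_cases hsv : s ∈ Set.range v
      · obtain ⟨⟨i, k⟩, rfl⟩ := hsv
        cases i using Fin.cases with
        | zero => exact isClearable_X_zero hv k
        | succ i => exact (hs ⟨(i, k), rfl⟩).elim
      · exact isClearable_X_of_notMem hsv
    · exact isClearable_innerQ_tailRows hv a b
  | algebraMap c => exact isClearable_algebraMap c
  | add f g _ _ hf hg => exact hf.add hg
  | mul f g _ _ hf hg => exact hf.mul hv hg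

end Clearing

section LaplacianOfInvariants

variable {σ K : Type*} [CommRing K] {n : ℕ} {v : Fin n × ℕ → σ}

theorem pderiv_innerQ (hv : Function.Injective v) (i : Fin n) (k a b : ℕ) :
    pderiv (v (i, k)) (innerQ v a b : MvPolynomial σ K) =
      (if a = k then 1 else 0 : K) • X (v (i, b)) +
        (if b = k then 1 else 0 : K) • X (v (i, a)) := by
  classical
  simp [innerQ, dotProduct, slot, pderiv_X, Pi.single_apply, hv.eq_iff, Finset.sum_add_distrib,
    ite_and, add_comm]

theorem gradPairing_mem_adjoin_of_mem_invariantGens (hv : Function.Injective v) (k₀ : ℕ) :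
    ∀ s ∈ invariantGens K v, ∀ t ∈ invariantGens K v,
      gradPairing (fun i => v (i, k₀)) s t ∈ Algebra.adjoin K (invariantGens K v) := by
  have hX : ∀ s ∉ Set.range v, ∀ f : MvPolynomial σ K,
      gradPairing (fun i => v (i, k₀)) (X s) f = 0 := fun s hs f => by
    simp [gradPairing_apply, pderiv_X_of_ne fun h : s = v _ => hs ⟨_, h.symm⟩]
  rintro _ (⟨s, hs, rfl⟩ | ⟨⟨a, b⟩, rfl⟩) _ (⟨t, ht, rfl⟩ | ⟨⟨c, d⟩, rfl⟩)
  · simp [hX s hs]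
  · simp [hX s hs]
  · simp [gradPairing_comm _ (X t), hX t ht]
  simp only [gradPairing_apply, pderiv_innerQ hv, add_mul, mul_add, smul_mul_smul,
    Finset.sum_add_distrib, ← Finset.smul_sum]
  repeat' refine add_mem ?_ ?_
  all_goals exact Subalgebra.smul_mem _ (innerQ_mem_adjoin v _ _) _

theorem laplacian_mem_adjoin_of_mem_invariantGens (hv : Function.Injective v) (k₀ : ℕ) :
    ∀ s ∈ invariantGens K v,
      laplacian (fun i => v (i, k₀)) s ∈ Algebra.adjoin K (invariantGens K v) := by
  rintro _ (⟨s, hs, rfl⟩ | ⟨⟨a, b⟩, rfl⟩)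
  · simp [laplacian_apply, pderiv_X_of_ne fun h : s = v _ => hs ⟨_, h.symm⟩]
  have hX : ∀ s t : σ, pderiv s (X t : MvPolynomial σ K) ∈ Algebra.adjoin K (invariantGens K v) :=
    fun s t => by
      classical
      rw [pderiv_X, Pi.single_apply]
      split_ifs
      exacts [one_mem _, zero_mem _]
  simp only [laplacian_apply, pderiv_innerQ hv, map_add, Derivation.map_smul]
  exact sum_mem fun i _ => add_mem (Subalgebra.smul_mem _ (hX _ _) _)
    (Subalgebra.smul_mem _ (hX _ _) _)

theorem laplacian_pow_mem_adjoin_invariantGens (hv : Function.Injective v) (k₀ N : ℕ)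
    {f : MvPolynomial σ K} (hf : f ∈ Algebra.adjoin K (invariantGens K v)) :
    (laplacian (fun i => v (i, k₀)) ^ N) f ∈ Algebra.adjoin K (invariantGens K v) := by
  induction N with
  | zero => exact hf
  | succ N ih =>
    rw [pow_succ', Module.End.mul_apply]
    exact laplacian_mem_adjoin (gradPairing_mem_adjoin_of_mem_invariantGens hv k₀)
      (laplacian_mem_adjoin_of_mem_invariantGens hv k₀) ih

theorem exists_forall_notMem_vars (hv : Function.Injective v) (p : MvPolynomial σ K) :
    ∃ k, ∀ i, v (i, k) ∉ p.vars := by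
  obtain ⟨k, hk⟩ := ((p.vars.finite_toSet.preimage hv.injOn).image Prod.snd).exists_notMem
  exact ⟨k, fun i hi => hk ⟨(i, k), hi, rfl⟩⟩

end LaplacianOfInvariants

section Invariants

variable {σ K : Type*} [Field K] {n : ℕ}

theorem exists_innerQ_pow_mul_mem_adjoin [IsAlgClosed K] [NeZero (2 : K)]
    {v : Fin (n + 1) × ℕ → σ} (hv : Function.Injective v) {k₀ : ℕ} {p : MvPolynomial σ K}
    (hp : IsOrthInvariant v p) (hc : IsClearable v k₀ p) :
    ∃ N, innerQ v k₀ k₀ ^ N * p ∈ Algebra.adjoin K (invariantGens K v) := by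
  obtain ⟨N, E, hE, O, -, h⟩ := hc
  refine ⟨N, ?_⟩
  have hpoint : ∀ x, eval x (innerQ v k₀ k₀) ≠ 0 →
      eval x (innerQ v k₀ k₀ ^ N * p) = eval x E := by
    intro x hx
    obtain ⟨τ, hτ⟩ := IsAlgClosed.exists_pow_nat_eq (eval x (innerQ v k₀ k₀)) two_pos
    have hrot : ∀ t : K, t ^ 2 = eval x (innerQ v k₀ k₀) →
        ∃ M, Mᵀ * M = 1 ∧ M *ᵥ slot v x k₀ = Pi.single 0 t := fun t ht => by
      rw [eval_innerQ] at ht hx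
      exact exists_transpose_mul_self_eq_one_mulVec_eq
        (by rw [← ht, single_dotProduct, Pi.single_eq_same, sq]) hx
    obtain ⟨M₁, hM₁, hM₁x⟩ := hrot τ hτ
    obtain ⟨M₂, hM₂, hM₂x⟩ := hrot (-τ) (by rw [neg_sq, hτ])
    have h₁ := h M₁ x τ hM₁ hM₁x
    have h₂ := h M₂ x (-τ) hM₂ hM₂x
    rw [eval_orthAction_of_isOrthInvariant hp hM₁] at h₁
    rw [eval_orthAction_of_isOrthInvariant hp hM₂] at h₂
    rw [map_mul, map_pow]
    exact mul_left_cancel₀ two_ne_zero (by linear_combination h₁ + h₂)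
  have hzero : innerQ v k₀ k₀ * (innerQ v k₀ k₀ ^ N * p - E) = 0 :=
    MvPolynomial.funext fun x => by
      by_cases hx : eval x (innerQ v k₀ k₀) = 0
      · simp [hx]
      · simp [hpoint x hx]
  rwa [sub_eq_zero.mp ((mul_eq_zero.mp hzero).resolve_left (innerQ_self_ne_zero hv k₀))]

theorem mem_adjoin_of_innerQ_pow_mul_mem [CharZero K] {v : Fin (n + 1) × ℕ → σ}
    (hv : Function.Injective v) {k₀ : ℕ} {p : MvPolynomial σ K} (hk₀ : ∀ i, v (i, k₀) ∉ p.vars)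
    {N : ℕ} (hN : innerQ v k₀ k₀ ^ N * p ∈ Algebra.adjoin K (invariantGens K v)) :
    p ∈ Algebra.adjoin K (invariantGens K v) := by
  have he : Function.Injective fun i => v (i, k₀) := fun i j h => by simpa using hv h
  have hΔ := laplacian_pow_mem_adjoin_invariantGens hv k₀ N hN
  rw [show innerQ v k₀ k₀ = normSq fun i => v (i, k₀) from rfl,
    laplacian_pow_normSq_pow_mul he fun i => pderiv_eq_zero_of_notMem_vars (hk₀ i),
    ← Nat.cast_smul_eq_nsmul K] at hΔ
  set c := ∏ m ∈ Finset.range N, 2 * (m + 1) * (Fintype.card (Fin (n + 1)) + 2 * m)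
  have hc : (c : K) ≠ 0 := Nat.cast_ne_zero.mpr (Finset.prod_ne_zero_iff.mpr fun m _ => by simp)
  have hp := Subalgebra.smul_mem _ hΔ (c : K)⁻¹
  rwa [smul_smul, inv_mul_cancel₀ hc, one_smul] at hp

theorem mem_adjoin_of_isOrthInvariant [IsAlgClosed K] [CharZero K] {v : Fin n × ℕ → σ}
    (hv : Function.Injective v) {p : MvPolynomial σ K} (hp : IsOrthInvariant v p) :
    p ∈ Algebra.adjoin K (invariantGens K v) := by
  induction n with
  | zero =>
    have hX : Set.range X ⊆ invariantGens K v := by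
      rintro _ ⟨s, rfl⟩
      exact Or.inl ⟨s, fun ⟨⟨i, _⟩, _⟩ => i.elim0, rfl⟩
    exact Algebra.adjoin_mono hX (by rw [adjoin_range_X]; trivial)
  | succ n ih =>
    obtain ⟨k₀, hk₀⟩ := exists_forall_notMem_vars hv p
    have hp' := ih (tailRows_injective hv) (isOrthInvariant_tailRows hv hp)
    obtain ⟨N, hN⟩ :=
      exists_innerQ_pow_mul_mem_adjoin hv hp (isClearable_of_mem_adjoin hv k₀ hp')
    exact mem_adjoin_of_innerQ_pow_mul_mem hv hk₀ hN

theorem isOrthInvariant_iff_mem_adjoin [IsAlgClosed K] [CharZero K] {v : Fin n × ℕ → σ}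
    (hv : Function.Injective v) {p : MvPolynomial σ K} :
    IsOrthInvariant v p ↔ p ∈ Algebra.adjoin K (invariantGens K v) :=
  ⟨mem_adjoin_of_isOrthInvariant hv, isOrthInvariant_of_mem_adjoin hv⟩

end Invariants

theorem orthAction_id_map_C {K : Type*} [CommRing K] {n : ℕ} (M : Matrix (Fin n) (Fin n) K) :
    orthAction id (M.map C) X = fun v : Fin n × ℕ => ∑ i : Fin n, C (M v.1 i) * X (i, v.2) := by
  ext1 v
  simp [orthAction, slot, mulVec, dotProduct]

theorem invariantGens_id {K : Type*} [CommRing K] {n : ℕ} :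
    invariantGens K (id : Fin n × ℕ → Fin n × ℕ) =
      {q | ∃ a b : ℕ, a ≤ b ∧ q = ∑ i : Fin n, X (i, a) * X (i, b)} := by
  ext q
  simp only [invariantGens, Set.range_id, Set.compl_univ, Set.image_empty, Set.empty_union,
    Set.mem_ofPred_eq, Set.mem_range, Prod.exists]
  constructor
  · rintro ⟨a, b, rfl⟩
    rcases le_total a b with hab | hba
    · exact ⟨a, b, hab, rfl⟩
    · exact ⟨b, a, hba, dotProduct_comm _ _⟩
  · rintro ⟨a, b, -, rfl⟩
    exact ⟨a, b, rfl⟩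

end WeylFFT

end

/-- Weyl's first fundamental theorem of invariant theory for `O(n)`:
the ring of invariants of `O(n)` acting diagonally on `Sym ⊕_{k≥0} V_k`
(with each `V_k ≅ ℂⁿ` the standard representation, modelled as the polynomial
ring in variables `x_{i,k}`, `i : Fin n`, `k : ℕ`) is generated as a `ℂ`-algebra
by the quadratics `q_{a,b} = Σ_i x_{i,a} x_{i,b}` for `0 ≤ a ≤ b`.
Here `O(n)` is the group of complex matrices `M` with `Mᵀ * M = 1`, acting by the
algebra automorphism sending `x_{i,k} ↦ Σ_j M i j • x_{j,k}`. -/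
theorem weyl_fft_orthogonal (n : ℕ) (p : MvPolynomial (Fin n × ℕ) ℂ) :
    (∀ M : Matrix (Fin n) (Fin n) ℂ, Mᵀ * M = 1 →
      aeval (fun v : Fin n × ℕ => ∑ i : Fin n, C (M v.1 i) * X (i, v.2)) p = p) ↔
    p ∈ Algebra.adjoin ℂ
      {q : MvPolynomial (Fin n × ℕ) ℂ |
        ∃ a b : ℕ, a ≤ b ∧ q = ∑ i : Fin n, X (i, a) * X (i, b)} := by
  simp only [← WeylFFT.orthAction_id_map_C, ← WeylFFT.invariantGens_id]
  exact WeylFFT.isOrthInvariant_iff_mem_adjoin Function.injective_id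
end

section
/- Let ∂: A → A be the shift-type derivation on the graded spaces A_m of quadratic generators, satisfying ∂(ω_{a,b}) = ω_{a+1,b} + ω_{a,b+1}. Then dim(A_{2m}/∂(A_{2m−1})) = 1 and dim(A_{2m+1}/∂(A_{2m})) = 0 for all m ≥ 1; moreover A_{2m} = ∂²(A_{2m−2}) ⊕ ⟨j^{2m}⟩ where j^{2m} = ω_{0,2m}. -/
/-- The basis symbol `ω_{a,b} = ω_{b,a}`, modelled in `(ℕ × ℕ) →₀ ℂ` as the
single basis vector indexed by the sorted pair. -/
noncomputable def w (a b : ℕ) : (ℕ × ℕ) →₀ ℂ :=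
  Finsupp.single (if a ≤ b then (a, b) else (b, a)) 1

/-- The graded piece `A_m`, the span of `{ω_{a,b} : a + b = m}`. -/
noncomputable def Asp (m : ℕ) : Submodule ℂ ((ℕ × ℕ) →₀ ℂ) :=
  Submodule.span ℂ {x | ∃ a b : ℕ, a + b = m ∧ x = w a b}

/-!
Every `∂ ω_{a,b} = ω_{a+1,b} + ω_{a,b+1}` with `a + b = n` ties together two neighbouring basis
vectors of `A_{n+1}`, so a subspace containing `∂(A_n)` and one basis vector of `A_{n+1}`
contains all of `A_{n+1}`. For `n = 2k` such a vector is `ω_{k,k+1} = ½ ∂ ω_{k,k}`, hence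
`∂(A_{2k}) = A_{2k+1}`; for `n = 2m+1` it is `j^{2m+2}`. Conversely the functional
`ω_{a,b} ↦ (-1)^a` (well defined on `A_{2m+2}`) kills `∂(A_{2m+1})` but not `j^{2m+2}`.
-/

lemma w_comm (a b : ℕ) : w a b = w b a := by
  unfold w
  split_ifs <;> first | rfl | (congr 1; simp only [Prod.mk.injEq]; omega)

lemma w_ne_zero (a b : ℕ) : w a b ≠ 0 :=
  Finsupp.single_ne_zero.2 one_ne_zero

lemma w_mem_Asp {a b n : ℕ} (h : a + b = n) : w a b ∈ Asp n :=
  Submodule.subset_span ⟨a, b, h, rfl⟩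

lemma Asp_le_iff {n : ℕ} {T : Submodule ℂ ((ℕ × ℕ) →₀ ℂ)} :
    Asp n ≤ T ↔ ∀ a b, a + b = n → w a b ∈ T := by
  simp only [Asp, Submodule.span_le, Set.subset_def, Set.mem_ofPred_eq, SetLike.mem_coe]
  exact ⟨fun h a b hab => h _ ⟨a, b, hab, rfl⟩, fun h x ⟨a, b, hab, hx⟩ => hx ▸ h a b hab⟩

section Shift

variable {D : ((ℕ × ℕ) →₀ ℂ) →ₗ[ℂ] ((ℕ × ℕ) →₀ ℂ)}

lemma map_Asp_le_Asp_succ (hD : ∀ a b : ℕ, D (w a b) = w (a + 1) b + w a (b + 1)) (n : ℕ) :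
    Submodule.map D (Asp n) ≤ Asp (n + 1) := by
  rw [Submodule.map_le_iff_le_comap, Asp_le_iff]
  intro a b hab
  rw [Submodule.mem_comap, hD]
  exact add_mem (w_mem_Asp (by omega)) (w_mem_Asp (by omega))

lemma w_succ_left_mem_iff (hD : ∀ a b : ℕ, D (w a b) = w (a + 1) b + w a (b + 1))
    {T : Submodule ℂ ((ℕ × ℕ) →₀ ℂ)} {a b : ℕ} (h : D (w a b) ∈ T) :
    w (a + 1) b ∈ T ↔ w a (b + 1) ∈ T := by
  rw [hD] at h
  exact ⟨fun h' => (Submodule.add_mem_iff_right T h').1 h,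
    fun h' => (Submodule.add_mem_iff_left T h').1 h⟩

lemma Asp_succ_le_of_mem (hD : ∀ a b : ℕ, D (w a b) = w (a + 1) b + w a (b + 1))
    {n : ℕ} {T : Submodule ℂ ((ℕ × ℕ) →₀ ℂ)} (hT : Submodule.map D (Asp n) ≤ T)
    {a b : ℕ} (hab : a + b = n + 1) (h : w a b ∈ T) : Asp (n + 1) ≤ T := by
  have step : ∀ j ≤ n, (w j (n + 1 - j) ∈ T ↔ w (j + 1) (n - j) ∈ T) := fun j hj => by
    have hDj := hT (Submodule.mem_map_of_mem (w_mem_Asp (show j + (n - j) = n by omega)))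
    rw [w_succ_left_mem_iff hD hDj, show n - j + 1 = n + 1 - j by omega]
  have chain : ∀ j ≤ n + 1, (w 0 (n + 1) ∈ T ↔ w j (n + 1 - j) ∈ T) := by
    intro j
    induction j with
    | zero => simp
    | succ j ih =>
      intro hj
      rw [ih (by omega), step j (by omega), show n + 1 - (j + 1) = n - j by omega]
  rw [Asp_le_iff]
  intro c d hcd
  obtain rfl : b = n + 1 - a := by omega
  obtain rfl : d = n + 1 - c := by omega
  exact (chain c (by omega)).1 ((chain a (by omega)).2 h)

lemma map_Asp_even (hD : ∀ a b : ℕ, D (w a b) = w (a + 1) b + w a (b + 1)) (k : ℕ) :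
    Submodule.map D (Asp (2 * k)) = Asp (2 * k + 1) := by
  refine le_antisymm (map_Asp_le_Asp_succ hD _) (Asp_succ_le_of_mem hD le_rfl
    (a := k) (b := k + 1) (by omega) ?_)
  have hDkk : D (w k k) = (2 : ℂ) • w k (k + 1) := by
    rw [hD, w_comm (k + 1) k, two_smul]
  have := Submodule.smul_mem _ (2 : ℂ)⁻¹
    (Submodule.mem_map_of_mem (f := D) (w_mem_Asp (show k + k = 2 * k by omega)))
  rwa [hDkk, smul_smul, inv_mul_cancel₀ two_ne_zero, one_smul] at this

lemma map_Asp_odd_sup_span (hD : ∀ a b : ℕ, D (w a b) = w (a + 1) b + w a (b + 1)) (m : ℕ) :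
    Submodule.map D (Asp (2 * m + 1)) ⊔ Submodule.span ℂ {w 0 (2 * m + 2)} =
      Asp (2 * m + 2) :=
  le_antisymm
    (sup_le (map_Asp_le_Asp_succ hD _)
      ((Submodule.span_singleton_le_iff_mem _ _).2 (w_mem_Asp (by omega))))
    (Asp_succ_le_of_mem hD le_sup_left (zero_add _)
      (Submodule.mem_sup_right (Submodule.mem_span_singleton_self _)))


noncomputable def altSum : ((ℕ × ℕ) →₀ ℂ) →ₗ[ℂ] ℂ :=
  Finsupp.linearCombination ℂ fun p => (-1) ^ p.1

lemma altSum_w {a b : ℕ} (h : a % 2 = b % 2) : altSum (w a b) = (-1) ^ a := by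
  unfold altSum w
  split_ifs
  · simp
  · simp only [Finsupp.linearCombination_single, one_smul]
    rw [neg_one_pow_eq_pow_mod_two, neg_one_pow_eq_pow_mod_two (n := a), h]

lemma map_Asp_odd_le_ker_altSum (hD : ∀ a b : ℕ, D (w a b) = w (a + 1) b + w a (b + 1))
    (m : ℕ) : Submodule.map D (Asp (2 * m + 1)) ≤ LinearMap.ker altSum := by
  rw [Submodule.map_le_iff_le_comap, Asp_le_iff]
  intro a b hab
  rw [Submodule.mem_comap, LinearMap.mem_ker, hD, map_add, altSum_w (by omega),
    altSum_w (by omega), pow_succ]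
  ring

lemma w_zero_not_mem_map_Asp_odd (hD : ∀ a b : ℕ, D (w a b) = w (a + 1) b + w a (b + 1))
    (m : ℕ) : w 0 (2 * m + 2) ∉ Submodule.map D (Asp (2 * m + 1)) := fun h => by
  have := map_Asp_odd_le_ker_altSum hD m h
  rw [LinearMap.mem_ker, altSum_w (by omega), pow_zero] at this
  exact one_ne_zero this

end Shift

/-- Let `∂` be the shift-type derivation with `∂(ω_{a,b}) = ω_{a+1,b} + ω_{a,b+1}`.
Then for all `m ≥ 1` (here written with index `m + 1`, so for all `m : ℕ`):
`dim (A_{2m+2} / ∂(A_{2m+1})) = 1` (i.e. `∂(A_{2m+1})` together with `j^{2m+2} = ω_{0,2m+2}`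
spans `A_{2m+2}` and `j^{2m+2} ∉ ∂(A_{2m+1})`),
`dim (A_{2m+3} / ∂(A_{2m+2})) = 0` (i.e. `∂(A_{2m+2}) = A_{2m+3}`), and
`A_{2m+2} = ∂²(A_{2m}) ⊕ ⟨j^{2m+2}⟩`. -/
theorem derivation_grading (D : ((ℕ × ℕ) →₀ ℂ) →ₗ[ℂ] ((ℕ × ℕ) →₀ ℂ))
    (hD : ∀ a b : ℕ, D (w a b) = w (a + 1) b + w a (b + 1)) (m : ℕ) :
    (Submodule.map D (Asp (2 * m + 1)) ⊔ Submodule.span ℂ {w 0 (2 * m + 2)} =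
        Asp (2 * m + 2) ∧
      w 0 (2 * m + 2) ∉ Submodule.map D (Asp (2 * m + 1))) ∧
    Submodule.map D (Asp (2 * m + 2)) = Asp (2 * m + 3) ∧
    (Submodule.map (D ∘ₗ D) (Asp (2 * m)) ⊔ Submodule.span ℂ {w 0 (2 * m + 2)} =
        Asp (2 * m + 2) ∧
      Disjoint (Submodule.map (D ∘ₗ D) (Asp (2 * m)))
        (Submodule.span ℂ {w 0 (2 * m + 2)})) := by
  have hDD : Submodule.map (D ∘ₗ D) (Asp (2 * m)) = Submodule.map D (Asp (2 * m + 1)) := by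
    rw [Submodule.map_comp, map_Asp_even hD]
  have hnotMem := w_zero_not_mem_map_Asp_odd hD m
  rw [hDD]
  exact ⟨⟨map_Asp_odd_sup_span hD m, hnotMem⟩, map_Asp_even hD (m + 1),
    map_Asp_odd_sup_span hD m, (Submodule.disjoint_span_singleton' (w_ne_zero _ _)).2 hnotMem⟩
end
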